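/- arXiv:2407.20781 — 2 statements merged into one kernel-verified Lean document; each statement's English description precedes it below -/
import Mathlib

section
/- Let K, F be totally real number fields with F ⊆ K and [K : F] = d. If α ∈ O_K^+ is F-representable, then there exists a totally positive definite quadratic O_F-lattice L(α) of rank at most d + 1 such that L(α) ⊗_{O_F} O_K represents α. In particular, if O_K = O_F·w_1 + ⋯ + O_F·w_g as an O_F-module, then there exists a totally positive semidefinite quadratic form Q in g variables with coefficients in O_F such that Q(w_1, …, w_g) = α. -/
open scoped NumberField TensorProduct
open Finset

noncomputable section

/-- An element of a field is *totally positive* if every real embedding sends it to a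
positive real number. -/
def TPos {F : Type*} [Field F] (x : F) : Prop := ∀ σ : F →+* ℝ, 0 < σ x

/-- `TNonneg x` (`x ⪰ 0`) : every real embedding sends `x` to a nonnegative real. -/
def TNonneg {F : Type*} [Field F] (x : F) : Prop := ∀ σ : F →+* ℝ, 0 ≤ σ x

/-- `TLe x y` (`x ⪯ y`) : every real embedding `σ` satisfies `σ x ≤ σ y`. -/
def TLe {F : Type*} [Field F] (x y : F) : Prop := ∀ σ : F →+* ℝ, σ x ≤ σ y

/-- A field is *totally real* if every embedding into `ℂ` has real image. -/
def IsTotallyRealField (F : Type*) [Field F] : Prop :=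
  ∀ σ : F →+* ℂ, ∀ x : F, (σ x).im = 0

/-- A quadratic `𝓞 F`-lattice `(L, Q)` is *totally positive definite* if `Q v` is totally
positive for every nonzero `v`. -/
def IsTotallyPositiveDefinite {F : Type*} [Field F] {L : Type*} [AddCommGroup L]
    [Module (𝓞 F) L] (Q : QuadraticMap (𝓞 F) L F) : Prop :=
  ∀ v : L, v ≠ 0 → TPos (Q v)

/-- The value of the `𝓞 K`-quadratic extension of `Q` to `L ⊗[𝓞 F] 𝓞 K`
at the element `∑ i, (c i) ⊗ (v i)`. -/
def ExtVal {F K : Type*} [Field F] [Field K] [Algebra F K] {L : Type*} [AddCommGroup L]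
    [Module (𝓞 F) L] (Q : QuadraticMap (𝓞 F) L F) {n : ℕ}
    (c : Fin n → 𝓞 K) (v : Fin n → L) : K :=
  (∑ i, (c i : K) ^ 2 * algebraMap F K (Q (v i))) +
    ∑ i, ∑ j, if i < j
      then (c i : K) * (c j : K) * algebraMap F K (QuadraticMap.polar (⇑Q) (v i) (v j))
      else 0

/-- `L ⊗[𝓞 F] 𝓞 K` (with `Q` extended `𝓞 K`-quadratically) represents `α ∈ 𝓞 K`. -/
def RepresentsOver {F K : Type*} [Field F] [Field K] [Algebra F K] {L : Type*}
    [AddCommGroup L] [Module (𝓞 F) L] (Q : QuadraticMap (𝓞 F) L F) (α : 𝓞 K) : Prop :=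
  ∃ (n : ℕ) (c : Fin n → 𝓞 K) (v : Fin n → L), ExtVal Q c v = (α : K)

/-- `α ∈ 𝓞 K` is *`F`-representable*: some totally positive definite quadratic
`𝓞 F`-lattice represents `α` after base change to `𝓞 K`. -/
def FRepresentable (F : Type*) {K : Type*} [Field F] [Field K] [Algebra F K]
    (α : 𝓞 K) : Prop :=
  ∃ (L : Type) (_ : AddCommGroup L) (_ : Module (𝓞 F) L) (_ : Module.Finite (𝓞 F) L)
    (Q : QuadraticMap (𝓞 F) L F),
      IsTotallyPositiveDefinite Q ∧ RepresentsOver Q α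

/-- There exists a totally positive definite quadratic `𝓞 F`-lattice `L` such that
`L ⊗[𝓞 F] 𝓞 K` is universal over `𝓞 K`. -/
def ExistsUniversalLattice (F K : Type*) [Field F] [Field K] [Algebra F K] : Prop :=
  ∃ (L : Type) (_ : AddCommGroup L) (_ : Module (𝓞 F) L) (_ : Module.Finite (𝓞 F) L)
    (Q : QuadraticMap (𝓞 F) L F),
      IsTotallyPositiveDefinite Q ∧ ∀ α : 𝓞 K, TPos ((α : K)) → RepresentsOver Q α

/-- The relative discriminant ideal of a quadratic extension `K/F`: the ideal of `𝓞 F`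
generated by all `det (Tr_{K/F} (aᵢ * aⱼ))` with `a₁, a₂ ∈ 𝓞 K`. -/
def RelDiscr (F K : Type*) [Field F] [Field K] [Algebra F K] : Ideal (𝓞 F) :=
  Ideal.span {d : 𝓞 F | ∃ a₁ a₂ : 𝓞 K,
    (d : F) =
      Algebra.trace F K ((a₁ : K) * (a₁ : K)) * Algebra.trace F K ((a₂ : K) * (a₂ : K)) -
        Algebra.trace F K ((a₁ : K) * (a₂ : K)) * Algebra.trace F K ((a₂ : K) * (a₁ : K))}

/-! Write `α = Q(∑ cᵢ ⊗ vᵢ)`. If `cᵢ = ∑ₖ bᵢₖ wₖ` with `bᵢₖ ∈ 𝓞 F`, bilinearity of the polar form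
gives `α = Q(∑ₖ wₖ ⊗ uₖ)` with `uₖ = ∑ᵢ bᵢₖ vᵢ`; so `α` is the value at `(w₁, …, w_g)` of the
pullback of `Q` along `eₖ ↦ uₖ`, which is totally positive semidefinite. For the rank bound take
for `w` an `F`-basis `e₁, …, e_d` of `K` lying in `𝓞 K`: the coordinates of the `cᵢ` become
integral after multiplying by some `0 ≠ t ∈ 𝓞 F`, so `t²α` is represented by the `𝓞 F`-span of
`u₁, …, u_d`, and `α` by the same lattice with `Q` rescaled by `t⁻²`. -/

open Matrix QuadraticMap

theorem Fintype.sum_sum_eq_sum_add_two_mul_sum_lt {R ι : Type*} [CommSemiring R] [Fintype ι]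
    [LinearOrder ι] (f : ι → ι → R) (hf : ∀ i j, f i j = f j i) :
    ∑ i, ∑ j, f i j = ∑ i, f i i + 2 * ∑ i, ∑ j, if i < j then f i j else 0 := by
  have hsplit : ∀ i j, f i j = (if i = j then f i j else 0) + (if i < j then f i j else 0) +
      (if j < i then f j i else 0) := by
    intro i j
    rcases lt_trichotomy i j with h | rfl | h
    · simp [h, h.ne, h.not_gt]
    · simp
    · simp [h, h.ne', h.not_gt, hf i j]
  rw [Finset.sum_congr rfl fun i _ => Finset.sum_congr rfl fun j _ => hsplit i j]
  simp only [Finset.sum_add_distrib, Finset.sum_ite_eq, Finset.mem_univ, if_true]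
  rw [Finset.sum_comm (f := fun i j => if j < i then f j i else 0)]
  ring

/-- Built from `polar Q` (twice the associated bilinear form), which exists even when `2` is not
invertible. -/
def gramMatrix {R M N : Type*} [CommRing R] [AddCommGroup M] [Module R M] [AddCommGroup N]
    [Module R N] {ι : Type*} (Q : QuadraticMap R M N) (v : ι → M) : Matrix ι ι N :=
  Matrix.of fun i j => polar Q (v i) (v j)

theorem gramMatrix_sum_smul {R M A : Type*} [CommRing R] [AddCommGroup M] [Module R M]
    [CommRing A] [Algebra R A] {ι κ : Type*} [Fintype ι] (Q : QuadraticMap R M A) (v : ι → M)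
    (b : Matrix ι κ R) :
    gramMatrix Q (fun k => ∑ i, b i k • v i) =
      (b.map (algebraMap R A))ᵀ * gramMatrix Q v * b.map (algebraMap R A) := by
  ext k l
  simp only [gramMatrix, of_apply, mul_apply, transpose_apply, map_apply,
    ← polarBilin_apply_apply, map_sum, map_smul, LinearMap.coe_sum, Finset.sum_apply,
    LinearMap.smul_apply, Algebra.smul_def, Finset.sum_mul, Finset.mul_sum]
  refine Finset.sum_congr rfl fun i _ => Finset.sum_congr rfl fun j _ => by ring

section ExtVal

variable {F K : Type*} [Field F] [Field K] [Algebra F K] {L : Type*} [AddCommGroup L]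
  [Module (𝓞 F) L]

theorem two_mul_extVal (Q : QuadraticMap (𝓞 F) L F) {n : ℕ} (c : Fin n → 𝓞 K) (v : Fin n → L) :
    2 * ExtVal Q c v = (fun i => (c i : K)) ⬝ᵥ
      ((gramMatrix Q v).map (algebraMap F K) *ᵥ fun i => (c i : K)) := by
  have hterm : ∀ i j, (c i : K) * ((gramMatrix Q v).map (algebraMap F K) i j * c j) =
      c i * c j * algebraMap F K (polar Q (v i) (v j)) := fun _ _ => by
    simp only [gramMatrix, map_apply, of_apply]
    ring
  simp only [dotProduct, mulVec, Finset.mul_sum, hterm]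
  rw [Fintype.sum_sum_eq_sum_add_two_mul_sum_lt _ fun i j => by rw [polar_comm Q (v i)]; ring]
  simp only [ExtVal, polar_self, two_smul, map_add, mul_add (2 : K)]
  congr 1
  rw [Finset.mul_sum]
  exact Finset.sum_congr rfl fun i _ => by ring

theorem extVal_comp {L' : Type*} [AddCommGroup L'] [Module (𝓞 F) L'] (Q : QuadraticMap (𝓞 F) L F)
    (T : L' →ₗ[𝓞 F] L) {n : ℕ} (c : Fin n → 𝓞 K) (v : Fin n → L') :
    ExtVal (Q.comp T) c v = ExtVal Q c (fun i => T (v i)) := by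
  simp only [ExtVal, QuadraticMap.comp_apply, polar, map_add]

theorem extVal_comp_linearCombination (Q : QuadraticMap (𝓞 F) L F) {g : ℕ} (w : Fin g → 𝓞 K)
    (u : Fin g → L) :
    ExtVal (Q.comp (Fintype.linearCombination (𝓞 F) u)) w (fun k => Pi.single k 1) =
      ExtVal Q w u := by
  simp only [extVal_comp, Fintype.linearCombination_apply_single, one_smul]

variable [CharZero K]

theorem extVal_smul (Q : QuadraticMap (𝓞 F) L F) (s : F) {n : ℕ} (c : Fin n → 𝓞 K)
    (v : Fin n → L) : ExtVal (s • Q) c v = algebraMap F K s * ExtVal Q c v := by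
  have hgram : (gramMatrix (s • Q) v).map (algebraMap F K) =
      algebraMap F K s • (gramMatrix Q v).map (algebraMap F K) := by
    ext i j
    simp [gramMatrix, polar_smul]
  apply mul_left_cancel₀ (two_ne_zero (α := K))
  rw [mul_left_comm, two_mul_extVal, two_mul_extVal, hgram, smul_mulVec, dotProduct_smul,
    smul_eq_mul]

theorem extVal_mul_left (Q : QuadraticMap (𝓞 F) L F) (t : 𝓞 K) {n : ℕ} (c : Fin n → 𝓞 K)
    (v : Fin n → L) : ExtVal Q (fun i => t * c i) v = (t : K) ^ 2 * ExtVal Q c v := by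
  apply mul_left_cancel₀ (two_ne_zero (α := K))
  have hc : (fun i => ((t * c i : 𝓞 K) : K)) = (t : K) • fun i => (c i : K) := by
    ext i
    simp
  rw [mul_left_comm, two_mul_extVal, two_mul_extVal, hc, mulVec_smul, dotProduct_smul,
    smul_dotProduct, smul_eq_mul, smul_eq_mul, ← mul_assoc, _root_.sq]

theorem extVal_eq_extVal_sum_smul (Q : QuadraticMap (𝓞 F) L F) {n g : ℕ} (c : Fin n → 𝓞 K)
    (v : Fin n → L) (w : Fin g → 𝓞 K) (b : Matrix (Fin n) (Fin g) (𝓞 F))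
    (hc : ∀ i, c i = ∑ k, algebraMap (𝓞 F) (𝓞 K) (b i k) * w k) :
    ExtVal Q c v = ExtVal Q w (fun k => ∑ i, b i k • v i) := by
  apply mul_left_cancel₀ (two_ne_zero (α := K))
  have hc' : (fun i => (c i : K)) = b.map (algebraMap (𝓞 F) K) *ᵥ fun k => (w k : K) := by
    ext i
    rw [hc i]
    push_cast
    rfl
  rw [two_mul_extVal, two_mul_extVal, gramMatrix_sum_smul, hc', Matrix.map_mul, Matrix.map_mul,
    transpose_map, Matrix.map_map]
  have hmap : ⇑(algebraMap F K) ∘ ⇑(algebraMap (𝓞 F) F) = algebraMap (𝓞 F) K := by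
    ext r
    exact (IsScalarTower.algebraMap_apply _ _ _ r).symm
  simp [hmap, Matrix.dotProduct_mulVec, Matrix.mulVec_mulVec, vecMul_mulVec, Matrix.mul_assoc]

end ExtVal

section TotallyPositive

variable {F : Type*} [Field F]

theorem tPos_sq {x : F} (hx : x ≠ 0) : TPos (x ^ 2) := fun σ => by
  have hσx : σ x ≠ 0 := (map_ne_zero σ).mpr hx
  rw [map_pow]
  positivity

theorem TPos.inv {x : F} (hx : TPos x) : TPos x⁻¹ := fun σ => by
  rw [map_inv₀]
  exact inv_pos.mpr (hx σ)

variable {L : Type*} [AddCommGroup L] [Module (𝓞 F) L] {Q : QuadraticMap (𝓞 F) L F}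

theorem IsTotallyPositiveDefinite.tNonneg (hQ : IsTotallyPositiveDefinite Q) (x : L) :
    TNonneg (Q x) := by
  rcases eq_or_ne x 0 with rfl | hx
  · simp [TNonneg]
  · exact fun σ => (hQ x hx σ).le

theorem IsTotallyPositiveDefinite.smul (hQ : IsTotallyPositiveDefinite Q) {s : F} (hs : TPos s) :
    IsTotallyPositiveDefinite (s • Q) := fun x hx σ => by
  rw [_root_.smul_apply, smul_eq_mul, map_mul]
  exact mul_pos (hs σ) (hQ x hx σ)

theorem IsTotallyPositiveDefinite.comp (hQ : IsTotallyPositiveDefinite Q) {L' : Type*}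
    [AddCommGroup L'] [Module (𝓞 F) L'] {f : L' →ₗ[𝓞 F] L} (hf : Function.Injective f) :
    IsTotallyPositiveDefinite (Q.comp f) := fun x hx =>
  hQ (f x) ((map_ne_zero_iff f hf).mpr hx)

end TotallyPositive

theorem finrank_baseChange_le_of_surjective {R A M N : Type*} [CommRing R] [CommRing A]
    [StrongRankCondition A] [Algebra R A] [AddCommGroup M] [Module R M] [AddCommGroup N]
    [Module R N] [Module.Finite A (A ⊗[R] M)] {f : M →ₗ[R] N} (hf : Function.Surjective f) :
    Module.finrank A (A ⊗[R] N) ≤ Module.finrank A (A ⊗[R] M) := by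
  have hsurj : Function.Surjective (f.baseChange A) := by
    rw [LinearMap.baseChange_eq_ltensor]
    exact LinearMap.lTensor_surjective A hf
  have := (f.baseChange A).finrank_range_le
  rwa [LinearMap.range_eq_top.mpr hsurj, finrank_top] at this

theorem finrank_baseChange_range_linearCombination_le {R A M : Type*} [CommRing R]
    [StrongRankCondition R] [CommRing A] [StrongRankCondition A] [Algebra R A] [AddCommGroup M]
    [Module R M] {d : ℕ} (u : Fin d → M) :
    Module.finrank A (A ⊗[R] LinearMap.range (Fintype.linearCombination R u)) ≤ d :=
  (finrank_baseChange_le_of_surjective (LinearMap.surjective_rangeRestrict _)).trans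
    (by rw [Module.finrank_baseChange, Module.finrank_fin_fun])

open scoped Pointwise in
theorem exists_integral_family_span_eq_top (F K : Type*) [Field F] [NumberField F] [Field K]
    [NumberField K] [Algebra F K] :
    ∃ e : Fin (Module.finrank F K) → 𝓞 K, Submodule.span F (Set.range fun j => (e j : K)) = ⊤ := by
  classical
  let b := Module.finBasis F K
  obtain ⟨y, hy, hint⟩ := exists_integral_multiples (𝓞 F) F (univ.image b)
  choose e he using fun j => (IsIntegralClosure.isIntegral_iff (A := 𝓞 K)).mp
    (hint _ (mem_image_of_mem b (mem_univ j)))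
  have hunit : IsUnit (algebraMap (𝓞 F) F y) :=
    ((map_ne_zero_iff _ (IsFractionRing.injective (𝓞 F) F)).mpr hy).isUnit
  have hrange : (Set.range fun j => (e j : K)) = algebraMap (𝓞 F) F y • Set.range b := by
    rw [← Set.range_smul]
    congr 1
    ext j
    rw [← algebra_compatible_smul]
    exact he j
  exact ⟨e, by rw [hrange, Submodule.span_smul_eq_of_isUnit _ _ hunit, b.span_eq]⟩

theorem exists_ne_zero_mul_eq_sum_of_span_eq_top {F K : Type*} [Field F] [NumberField F]
    [Field K] [Algebra F K] {d : ℕ} {e : Fin d → 𝓞 K}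
    (he : Submodule.span F (Set.range fun j => (e j : K)) = ⊤) {n : ℕ} (c : Fin n → 𝓞 K) :
    ∃ (t : 𝓞 F) (b : Matrix (Fin n) (Fin d) (𝓞 F)), t ≠ 0 ∧
      ∀ i, algebraMap (𝓞 F) (𝓞 K) t * c i = ∑ j, algebraMap (𝓞 F) (𝓞 K) (b i j) * e j := by
  choose f hf using fun i => (Submodule.mem_span_range_iff_exists_fun F).mp
    (he ▸ Submodule.mem_top : (c i : K) ∈ Submodule.span F (Set.range fun j => (e j : K)))
  obtain ⟨t, ht⟩ := IsLocalization.exist_integer_multiples (nonZeroDivisors (𝓞 F)) univ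
    fun p : Fin n × Fin d => f p.1 p.2
  choose b hb using fun i j => ht (i, j) (mem_univ _)
  refine ⟨t, b, nonZeroDivisors.coe_ne_zero t, fun i => NumberField.RingOfIntegers.ext ?_⟩
  push_cast
  change algebraMap (𝓞 F) K t * c i = ∑ j, algebraMap (𝓞 F) K (b i j) * e j
  rw [← hf i, Finset.mul_sum]
  refine Finset.sum_congr rfl fun j _ => ?_
  rw [IsScalarTower.algebraMap_apply (𝓞 F) F K, IsScalarTower.algebraMap_apply (𝓞 F) F K (b i j),
    hb, Algebra.smul_def, Algebra.smul_def, map_mul, mul_assoc]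

theorem FRepresentable.exists_tNonneg_extVal_eq {F K : Type*} [Field F] [Field K] [CharZero K]
    [Algebra F K] {α : 𝓞 K} (h : FRepresentable F α) {g : ℕ} (w : Fin g → 𝓞 K)
    (hw : ∀ x : 𝓞 K, ∃ c : Fin g → 𝓞 F, x = ∑ i, algebraMap (𝓞 F) (𝓞 K) (c i) * w i) :
    ∃ Q : QuadraticMap (𝓞 F) (Fin g → 𝓞 F) F,
      (∀ x, TNonneg (Q x)) ∧ ExtVal Q w (fun i => Pi.single i 1) = (α : K) := by
  obtain ⟨L, _, _, _, Q, hQ, n, c, v, hα⟩ := h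
  choose b hb using fun i => hw (c i)
  refine ⟨Q.comp (Fintype.linearCombination (𝓞 F) fun k => ∑ i, b i k • v i),
    fun x => hQ.tNonneg _, ?_⟩
  rw [extVal_comp_linearCombination, ← extVal_eq_extVal_sum_smul Q c v w b hb, hα]

theorem FRepresentable.exists_finrank_le {F K : Type*} [Field F] [NumberField F] [Field K]
    [NumberField K] [Algebra F K] {α : 𝓞 K} (h : FRepresentable F α) :
    ∃ (L : Type) (_ : AddCommGroup L) (_ : Module (𝓞 F) L) (_ : Module.Finite (𝓞 F) L)
      (Q : QuadraticMap (𝓞 F) L F), IsTotallyPositiveDefinite Q ∧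
        Module.finrank F (F ⊗[𝓞 F] L) ≤ Module.finrank F K ∧ RepresentsOver Q α := by
  obtain ⟨L, _, _, _, Q, hQ, n, c, v, hα⟩ := h
  obtain ⟨e, he⟩ := exists_integral_family_span_eq_top F K
  obtain ⟨t, b, ht, hb⟩ := exists_ne_zero_mul_eq_sum_of_span_eq_top he c
  set T := Fintype.linearCombination (𝓞 F) fun j => ∑ i, b i j • v i
  set s : F := algebraMap (𝓞 F) F t
  have hs : s ≠ 0 := (map_ne_zero_iff _ (IsFractionRing.injective (𝓞 F) F)).mpr ht
  have hval : ExtVal Q e (fun j => ∑ i, b i j • v i) = algebraMap F K s ^ 2 * α := by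
    rw [← extVal_eq_extVal_sum_smul Q _ v e b hb, extVal_mul_left, hα]
    rfl
  refine ⟨LinearMap.range T, inferInstance, inferInstance, inferInstance,
    ((s ^ 2)⁻¹ • Q).comp (LinearMap.range T).subtype,
    (hQ.smul (tPos_sq hs).inv).comp Subtype.val_injective,
    finrank_baseChange_range_linearCombination_le _,
    _, e, fun j => T.rangeRestrict (Pi.single j 1), ?_⟩
  calc ExtVal (((s ^ 2)⁻¹ • Q).comp (LinearMap.range T).subtype) e
        (fun j => T.rangeRestrict (Pi.single j 1))
      = ExtVal (((s ^ 2)⁻¹ • Q).comp T) e (fun j => Pi.single j 1) := by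
        simp only [extVal_comp]; rfl
    _ = algebraMap F K (s ^ 2)⁻¹ * (algebraMap F K s ^ 2 * α) := by
        rw [extVal_comp_linearCombination, extVal_smul, hval]
    _ = α := by
        rw [map_inv₀, map_pow, inv_mul_cancel_left₀ (pow_ne_zero 2 ((map_ne_zero _).mpr hs))]

theorem statement1_general (F K : Type) [Field F] [NumberField F] [Field K] [NumberField K]
    [Algebra F K]
    (d : ℕ) (hd : Module.finrank F K = d)
    (α : 𝓞 K) (hrep : FRepresentable F α) :
    (∃ (L : Type) (_ : AddCommGroup L) (_ : Module (𝓞 F) L) (_ : Module.Finite (𝓞 F) L)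
      (Q : QuadraticMap (𝓞 F) L F),
        IsTotallyPositiveDefinite Q ∧
        Module.finrank F (F ⊗[𝓞 F] L) ≤ d + 1 ∧
        RepresentsOver Q α) ∧
    ∀ (g : ℕ) (w : Fin g → 𝓞 K),
      (∀ x : 𝓞 K, ∃ c : Fin g → 𝓞 F, x = ∑ i, algebraMap (𝓞 F) (𝓞 K) (c i) * w i) →
      ∃ Q : QuadraticMap (𝓞 F) (Fin g → 𝓞 F) F,
        (∀ v : Fin g → 𝓞 F, TNonneg (Q v)) ∧
        ExtVal Q w (fun i => Pi.single i 1) = (α : K) := by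
  subst hd
  obtain ⟨L, iL, iM, iF, Q, hQ, hrank, hα⟩ := hrep.exists_finrank_le
  exact ⟨⟨L, iL, iM, iF, Q, hQ, hrank.trans (Nat.le_succ _), hα⟩,
    fun _ w hw => hrep.exists_tNonneg_extVal_eq w hw⟩

/-- If `α ∈ 𝓞 K` is totally positive and `F`-representable, then it is
represented by (the base change of) a totally positive definite quadratic `𝓞 F`-lattice of
rank at most `d + 1`, where `d = [K : F]`.  In particular, if `𝓞 K = 𝓞 F w₁ + ⋯ + 𝓞 F w_g`,
then there is a totally positive semidefinite quadratic form `Q` in `g` variables over `𝓞 F`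
with `Q(w₁, …, w_g) = α`. -/
theorem statement1 (F K : Type) [Field F] [NumberField F] [Field K] [NumberField K]
    [Algebra F K] (hF : IsTotallyRealField F) (hK : IsTotallyRealField K)
    (d : ℕ) (hd : Module.finrank F K = d)
    (α : 𝓞 K) (hpos : TPos ((α : K))) (hrep : FRepresentable F α) :
    (∃ (L : Type) (_ : AddCommGroup L) (_ : Module (𝓞 F) L) (_ : Module.Finite (𝓞 F) L)
      (Q : QuadraticMap (𝓞 F) L F),
        IsTotallyPositiveDefinite Q ∧
        Module.finrank F (F ⊗[𝓞 F] L) ≤ d + 1 ∧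
        RepresentsOver Q α) ∧
    ∀ (g : ℕ) (w : Fin g → 𝓞 K),
      (∀ x : 𝓞 K, ∃ c : Fin g → 𝓞 F, x = ∑ i, algebraMap (𝓞 F) (𝓞 K) (c i) * w i) →
      ∃ Q : QuadraticMap (𝓞 F) (Fin g → 𝓞 F) F,
        (∀ v : Fin g → 𝓞 F, TNonneg (Q v)) ∧
        ExtVal Q w (fun i => Pi.single i 1) = (α : K) :=
  statement1_general F K d hd α hrep

end
end

section
/- Let F be a real quadratic number field with discriminant D = D_F and with two real embeddings ρ1, ρ2 : F → ℝ. Then for any x, y ∈ ℝ there exists α ∈ O_F such that x ≤ ρ1(α) < x + l_F and y ≤ ρ2(α) < y + l_F, where l_F = (1/2)√D + 1. -/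
open scoped NumberField TensorProduct
open Finset

noncomputable section

/-! For a ℤ-basis `b₀, b₁` of `𝓞 F` put `d = ρ₁ b₀ ρ₂ b₁ - ρ₂ b₀ ρ₁ b₁`, so that `D = d²`. The
coordinates of `1` in this basis are coprime, and Bézout on them produces `ω ∈ 𝓞 F` with
`ρ₁ ω - ρ₂ ω = √D`. Looking for `α = a + b ω`, rounding `(x - y) / √D` gives `b` such that the two
lower ends `x - b ρ₁ ω` and `y - b ρ₂ ω` lie within `√D / 2` of each other; the ceiling `a` of the
larger one then satisfies both pairs of inequalities. -/

section QuadraticLattice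

open Module

/-- `1` is primitive, since a common divisor of its coordinates is a unit of `S`, hence has
norm `±1`. -/
theorem isCoprime_repr_one {S : Type*} [CommRing S] (b : Basis (Fin 2) ℤ S) :
    IsCoprime (b.repr 1 0) (b.repr 1 1) := by
  rw [Int.isCoprime_iff_gcd_eq_one]
  obtain ⟨p, hp⟩ := Int.gcd_dvd_left (b.repr 1 0) (b.repr 1 1)
  obtain ⟨q, hq⟩ := Int.gcd_dvd_right (b.repr 1 0) (b.repr 1 1)
  set g := Int.gcd (b.repr 1 0) (b.repr 1 1)
  have hunit : IsUnit (algebraMap ℤ S g) := by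
    refine IsUnit.of_mul_eq_one (p • b 0 + q • b 1) ?_
    have hone := b.sum_repr 1
    rw [Fin.sum_univ_two, hp, hq, mul_smul, mul_smul, ← smul_add] at hone
    rw [← hone]
    exact (Algebra.smul_def _ _).symm
  have hnorm := hunit.map (Algebra.norm ℤ)
  rwa [Algebra.norm_algebraMap_of_basis b, Fintype.card_fin, isUnit_pow_iff two_ne_zero,
    Int.isUnit_iff_natAbs_eq, Int.natAbs_natCast] at hnorm

/-- By Cramer's rule `ρ₁ b₀ - ρ₂ b₀ = c₁ d` and `ρ₁ b₁ - ρ₂ b₁ = -c₀ d`, where `1 = c₀ b₀ + c₁ b₁`;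
take `ω = v b₀ - u b₁` with `u c₀ + v c₁ = 1`. -/
theorem exists_ringHom_sub_eq_det {S R : Type*} [CommRing S] [CommRing R]
    (b : Basis (Fin 2) ℤ S) (ρ₁ ρ₂ : S →+* R) :
    ∃ ω : S, ρ₁ ω - ρ₂ ω = ρ₁ (b 0) * ρ₂ (b 1) - ρ₂ (b 0) * ρ₁ (b 1) := by
  obtain ⟨u, v, huv⟩ := isCoprime_repr_one b
  have hone : b.repr 1 0 • b 0 + b.repr 1 1 • b 1 = 1 := by
    simpa only [Fin.sum_univ_two] using b.sum_repr 1
  have h₁ := congrArg ρ₁ hone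
  have h₂ := congrArg ρ₂ hone
  simp only [map_add, map_one, zsmul_eq_mul, map_mul, map_intCast] at h₁ h₂
  have huv' : (u : R) * (b.repr 1 0 : R) + (v : R) * (b.repr 1 1 : R) = 1 := by
    simpa using congrArg (Int.cast : ℤ → R) huv
  refine ⟨v • b 0 - u • b 1, ?_⟩
  simp only [map_sub, zsmul_eq_mul, map_mul, map_intCast]
  linear_combination (v * ρ₂ (b 0) - u * ρ₂ (b 1)) * h₁ + (u * ρ₁ (b 1) - v * ρ₁ (b 0)) * h₂ +
    (ρ₁ (b 0) * ρ₂ (b 1) - ρ₂ (b 0) * ρ₁ (b 1)) * huv'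

end QuadraticLattice

section RealQuadraticField

open Module NumberField

variable {F : Type*} [Field F] [NumberField F] (hdeg : finrank ℚ F = 2) {ρ₁ ρ₂ : F →+* ℝ}
  (hρ : ρ₁ ≠ ρ₂)

include hdeg hρ

theorem discr_eq_embeddings_det_sq (b : Basis (Fin 2) ℤ (𝓞 F)) :
    (discr F : ℝ) = (ρ₁ (b 0) * ρ₂ (b 1) - ρ₂ (b 0) * ρ₁ (b 1)) ^ 2 := by
  let σ : Fin 2 → (F →ₐ[ℚ] ℂ) := ![(Complex.ofRealHom.comp ρ₁).toRatAlgHom,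
    (Complex.ofRealHom.comp ρ₂).toRatAlgHom]
  have hσ : Function.Injective σ := by
    have hne : (Complex.ofRealHom.comp ρ₁).toRatAlgHom ≠ (Complex.ofRealHom.comp ρ₂).toRatAlgHom :=
      fun h ↦ hρ <| RingHom.ext fun z ↦ Complex.ofReal_injective (DFunLike.congr_fun h z)
    intro i j
    fin_cases i <;> fin_cases j <;> simp [σ, hne, hne.symm]
  have hcard : Fintype.card (Fin 2) = Fintype.card (F →ₐ[ℚ] ℂ) := by
    rw [← Fintype.card_congr (RingHom.equivRatAlgHom F ℂ), Embeddings.card, hdeg, Fintype.card_fin]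
  let e : Fin 2 ≃ (F →ₐ[ℚ] ℂ) :=
    Equiv.ofBijective σ ((Fintype.bijective_iff_injective_and_card σ).2 ⟨hσ, hcard⟩)
  let bℚ := b.localizationLocalization ℚ (nonZeroDivisors ℤ) F
  have key := Algebra.discr_eq_det_embeddingsMatrixReindex_pow_two ℚ ℂ bℚ e
  rw [Algebra.discr_localizationLocalization, discr_eq_discr, Matrix.det_fin_two] at key
  apply Complex.ofReal_injective
  simpa [Algebra.embeddingsMatrixReindex, Algebra.embeddingsMatrix, e, σ, bℚ] using key

theorem exists_embedding_sub_eq_sqrt_discr : ∃ ω : 𝓞 F, ρ₁ ω - ρ₂ ω = √(discr F : ℝ) := by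
  let b := finBasisOfFinrankEq ℤ (𝓞 F) ((RingOfIntegers.rank F).trans hdeg)
  obtain ⟨ω, hω⟩ :=
    exists_ringHom_sub_eq_det b (ρ₁.comp (algebraMap (𝓞 F) F)) (ρ₂.comp (algebraMap _ F))
  simp only [RingHom.comp_apply, ← RingOfIntegers.coe_eq_algebraMap] at hω
  rw [discr_eq_embeddings_det_sq hdeg hρ b, Real.sqrt_sq_eq_abs]
  rcases abs_cases (ρ₁ (b 0) * ρ₂ (b 1) - ρ₂ (b 0) * ρ₁ (b 1)) with ⟨habs, -⟩ | ⟨habs, -⟩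
  · exact ⟨ω, hω.trans habs.symm⟩
  · refine ⟨-ω, ?_⟩
    rw [habs, ← hω]
    simp only [RingOfIntegers.coe_eq_algebraMap, map_neg]
    ring

theorem discr_pos_of_embeddings_ne : 0 < discr F := by
  have hsq := discr_eq_embeddings_det_sq hdeg hρ
    (finBasisOfFinrankEq ℤ (𝓞 F) ((RingOfIntegers.rank F).trans hdeg))
  have hnonneg : (0 : ℝ) ≤ discr F := hsq ▸ sq_nonneg _
  exact lt_of_le_of_ne (mod_cast hnonneg) (discr_ne_zero F).symm

end RealQuadraticField

theorem exists_int_le_lt_of_abs_sub_le {L₁ L₂ c : ℝ} (h : |L₁ - L₂| ≤ c) :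
    ∃ a : ℤ, (L₁ ≤ a ∧ a < L₁ + c + 1) ∧ (L₂ ≤ a ∧ a < L₂ + c + 1) := by
  refine ⟨⌈max L₁ L₂⌉, ?_⟩
  have hle := Int.le_ceil (max L₁ L₂)
  have hlt := Int.ceil_lt_add_one (max L₁ L₂)
  have hmax : max L₁ L₂ ≤ L₁ + c ∧ max L₁ L₂ ≤ L₂ + c := by
    constructor <;> apply max_le <;> linarith [abs_le.mp h]
  refine ⟨⟨?_, ?_⟩, ?_, ?_⟩ <;> linarith [le_max_left L₁ L₂, le_max_right L₁ L₂]

theorem exists_int_abs_sub_mul_le (t : ℝ) {δ : ℝ} (hδ : 0 < δ) :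
    ∃ n : ℤ, |t - n * δ| ≤ δ / 2 := by
  refine ⟨round (t / δ), ?_⟩
  calc |t - round (t / δ) * δ| = |t / δ - round (t / δ)| * δ := by
        rw [← abs_of_pos hδ, ← abs_mul, abs_of_pos hδ, sub_mul, div_mul_cancel₀ t hδ.ne']
    _ ≤ 1 / 2 * δ := by gcongr; exact abs_sub_round _
    _ = δ / 2 := by ring

theorem exists_int_add_int_mul_le_lt (x y : ℝ) {u₁ u₂ : ℝ} (hu : 0 < u₁ - u₂) :
    ∃ a b : ℤ,
      (x ≤ a + b * u₁ ∧ a + b * u₁ < x + ((u₁ - u₂) / 2 + 1)) ∧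
      (y ≤ a + b * u₂ ∧ a + b * u₂ < y + ((u₁ - u₂) / 2 + 1)) := by
  obtain ⟨b, hb⟩ := exists_int_abs_sub_mul_le (x - y) hu
  have hclose : |(x - b * u₁) - (y - b * u₂)| ≤ (u₁ - u₂) / 2 := by
    convert hb using 2
    ring
  obtain ⟨a, ⟨h₁, h₁'⟩, h₂, h₂'⟩ := exists_int_le_lt_of_abs_sub_le hclose
  exact ⟨a, b, ⟨by linarith, by linarith⟩, by linarith, by linarith⟩

theorem statement7_general (F : Type) [Field F] [NumberField F]
    (hdeg : Module.finrank ℚ F = 2) (ρ₁ ρ₂ : F →+* ℝ) (hρ : ρ₁ ≠ ρ₂) (x y : ℝ) :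
    ∃ α : 𝓞 F,
      (x ≤ ρ₁ ((α : F)) ∧
        ρ₁ ((α : F)) < x + (Real.sqrt ((NumberField.discr F : ℝ)) / 2 + 1)) ∧
      (y ≤ ρ₂ ((α : F)) ∧
        ρ₂ ((α : F)) < y + (Real.sqrt ((NumberField.discr F : ℝ)) / 2 + 1)) := by
  obtain ⟨ω, hω⟩ := exists_embedding_sub_eq_sqrt_discr hdeg hρ
  have hpos : 0 < ρ₁ ω - ρ₂ ω := hω ▸ Real.sqrt_pos.2 (mod_cast discr_pos_of_embeddings_ne hdeg hρ)
  obtain ⟨a, b, h₁, h₂⟩ := exists_int_add_int_mul_le_lt x y hpos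
  rw [hω] at h₁ h₂
  exact ⟨a + b * ω, by simpa using h₁, by simpa using h₂⟩

/-- Let `F` be a real quadratic number field with discriminant `D` and
real embeddings `ρ₁, ρ₂`.  For any `x, y ∈ ℝ` there is `α ∈ 𝓞 F` with
`x ≤ ρ₁ α < x + l_F` and `y ≤ ρ₂ α < y + l_F`, where `l_F = √D / 2 + 1`. -/
theorem statement7 (F : Type) [Field F] [NumberField F] (hF : IsTotallyRealField F)
    (hdeg : Module.finrank ℚ F = 2) (ρ₁ ρ₂ : F →+* ℝ) (hρ : ρ₁ ≠ ρ₂) (x y : ℝ) :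
    ∃ α : 𝓞 F,
      (x ≤ ρ₁ ((α : F)) ∧
        ρ₁ ((α : F)) < x + (Real.sqrt ((NumberField.discr F : ℝ)) / 2 + 1)) ∧
      (y ≤ ρ₂ ((α : F)) ∧
        ρ₂ ((α : F)) < y + (Real.sqrt ((NumberField.discr F : ℝ)) / 2 + 1)) :=
  statement7_general F hdeg ρ₁ ρ₂ hρ x y

end
end
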